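/- arXiv:2103.16723 — 5 statements merged into one kernel-verified Lean document; each statement's English description precedes it below -/
import Mathlib

section
/- Let S be a numerical semigroup that is not of the form {0, m, m+1, m+2, ...}. Then the concentration of S equals 2 if and only if for every gap h of S (i.e., h ∈ ℕ \ S) with h > m(S), we have h+1 ∈ S, where m(S) denotes the multiplicity of S. -/
open Set

/-- A numerical semigroup: contains 0, closed under addition, finite complement. -/
def IsNumSgp (S : Set ℕ) : Prop :=
  0 ∈ S ∧ (∀ a ∈ S, ∀ b ∈ S, a + b ∈ S) ∧ (Sᶜ : Set ℕ).Finite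

/-- The multiplicity: least positive element. -/
noncomputable def mult (S : Set ℕ) : ℕ := sInf {n | n ∈ S ∧ n ≠ 0}

/-- next_S(s) = min { x ∈ S | s < x }. -/
noncomputable def nextS (S : Set ℕ) (s : ℕ) : ℕ := sInf {x | x ∈ S ∧ s < x}

/-- The concentration C(S) = max { next_S(s) - s | s ∈ S \ {0} }. -/
noncomputable def conc (S : Set ℕ) : ℕ :=
  sSup {d | ∃ s ∈ S, s ≠ 0 ∧ d = nextS S s - s}

/-- The Frobenius number: largest gap. -/
noncomputable def frob (S : Set ℕ) : ℕ := sSup (Sᶜ : Set ℕ)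

/-- The genus: number of gaps. -/
noncomputable def genus (S : Set ℕ) : ℕ := (Sᶜ : Set ℕ).ncard

/-- x is a minimal generator of S. -/
def IsMinGen (S : Set ℕ) (x : ℕ) : Prop :=
  x ∈ S ∧ x ≠ 0 ∧ ¬∃ a ∈ S, ∃ b ∈ S, a ≠ 0 ∧ b ≠ 0 ∧ a + b = x

/-- The embedding dimension: number of minimal generators. -/
noncomputable def edim (S : Set ℕ) : ℕ := {x | IsMinGen S x}.ncard

/-- n(S): the number of elements of S smaller than the Frobenius number. -/
noncomputable def nS (S : Set ℕ) : ℕ := {s | s ∈ S ∧ s < frob S}.ncard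

/-- The half-line Δ(m) = {0} ∪ {m, m+1, ...}. -/
def Delta (m : ℕ) : Set ℕ := {0} ∪ {n | m ≤ n}

def IsHalfLine (S : Set ℕ) : Prop := ∃ m, S = Delta m

/-- An irreducible numerical semigroup. -/
def Irred (S : Set ℕ) : Prop :=
  ¬∃ T₁ T₂ : Set ℕ, IsNumSgp T₁ ∧ IsNumSgp T₂ ∧ S ⊂ T₁ ∧ S ⊂ T₂ ∧ S = T₁ ∩ T₂

/-!
Concentration at most `k` says that every nonzero element `s` of `S` is followed by another element
within distance `k`. For `k = 1` this forces `S` to be a half-line, so outside half-lines the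
concentration is at least `2`. For `k = 2`, an induction upwards from the multiplicity shows that
no two consecutive integers above `m(S)` are gaps; conversely, if every gap `h > m(S)` is followed by
an element, each nonzero `s ∈ S` has `s + 1` or `s + 2` in `S`.
-/

section

variable {S : Set ℕ}

lemma mem_of_frob_lt (hfin : Sᶜ.Finite) {n : ℕ} (hn : frob S < n) : n ∈ S := by
  by_contra h
  exact (le_csSup hfin.bddAbove (show n ∈ Sᶜ from h)).not_gt hn

lemma nextS_mem_and_lt (hfin : Sᶜ.Finite) (s : ℕ) : nextS S s ∈ S ∧ s < nextS S s :=
  Nat.sInf_mem (⟨s + frob S + 1, mem_of_frob_lt hfin (by omega), by omega⟩ :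
    {x | x ∈ S ∧ s < x}.Nonempty)

lemma nextS_le {s x : ℕ} (hx : x ∈ S) (hsx : s < x) : nextS S s ≤ x :=
  Nat.sInf_le ⟨hx, hsx⟩

lemma mult_mem_and_ne_zero (hfin : Sᶜ.Finite) : mult S ∈ S ∧ mult S ≠ 0 :=
  Nat.sInf_mem (⟨frob S + 1, mem_of_frob_lt hfin (by omega), by omega⟩ :
    {n | n ∈ S ∧ n ≠ 0}.Nonempty)

lemma mult_le {x : ℕ} (hx : x ∈ S) (hx0 : x ≠ 0) : mult S ≤ x :=
  Nat.sInf_le ⟨hx, hx0⟩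

lemma nextS_sub_le_iff (hfin : Sᶜ.Finite) (s k : ℕ) :
    nextS S s - s ≤ k ↔ ∃ x ∈ S, s < x ∧ x ≤ s + k := by
  obtain ⟨hmem, hlt⟩ := nextS_mem_and_lt hfin s
  constructor
  · intro h
    exact ⟨nextS S s, hmem, hlt, by omega⟩
  · rintro ⟨x, hx, hsx, hxk⟩
    have := nextS_le hx hsx
    omega

lemma conc_le_iff (hfin : Sᶜ.Finite) (k : ℕ) :
    conc S ≤ k ↔ ∀ s ∈ S, s ≠ 0 → ∃ x ∈ S, s < x ∧ x ≤ s + k := by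
  have hbdd : BddAbove {d | ∃ s ∈ S, s ≠ 0 ∧ d = nextS S s - s} := by
    refine ⟨frob S + 1, ?_⟩
    rintro _ ⟨s, -, -, rfl⟩
    have := nextS_le (mem_of_frob_lt hfin (show frob S < s + frob S + 1 by omega))
      (show s < s + frob S + 1 by omega)
    omega
  simp only [← nextS_sub_le_iff hfin]
  constructor
  · intro h s hs hs0
    exact (le_csSup hbdd ⟨s, hs, hs0, rfl⟩).trans h
  · intro h
    apply csSup_le'
    rintro _ ⟨s, hs, hs0, rfl⟩
    exact h s hs hs0

lemma isHalfLine_of_conc_le_one (h0 : 0 ∈ S) (hfin : Sᶜ.Finite) (hc : conc S ≤ 1) :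
    IsHalfLine S := by
  have hsucc : ∀ s ∈ S, s ≠ 0 → s + 1 ∈ S := by
    intro s hs hs0
    obtain ⟨x, hx, hsx, hxs⟩ := (conc_le_iff hfin 1).mp hc s hs hs0
    rwa [show s + 1 = x by omega]
  obtain ⟨hm, hm0⟩ := mult_mem_and_ne_zero hfin
  refine ⟨mult S, Set.ext fun n => ⟨fun hn => ?_, ?_⟩⟩
  · by_cases hn0 : n = 0
    · exact Or.inl hn0
    · exact Or.inr (mult_le hn hn0)
  · rintro (rfl | hn)
    · exact h0
    · induction n, hn using Nat.le_induction with
      | base => exact hm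
      | succ n hmn ih => exact hsucc n ih (by omega)

lemma mem_or_succ_mem_of_conc_le_two (hfin : Sᶜ.Finite) (hc : conc S ≤ 2) {n : ℕ}
    (hn : mult S ≤ n) : n ∈ S ∨ n + 1 ∈ S := by
  obtain ⟨hm, hm0⟩ := mult_mem_and_ne_zero hfin
  induction n, hn using Nat.le_induction with
  | base => exact Or.inl hm
  | succ n hmn ih =>
    refine (em (n + 1 ∈ S)).imp id fun hn1 => ?_
    obtain ⟨x, hx, hnx, hxn⟩ := (conc_le_iff hfin 2).mp hc n (ih.resolve_right hn1) (by omega)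
    rwa [show n + 1 + 1 = x by grind]

end

theorem stmt0 (S : Set ℕ) (hS : IsNumSgp S) (hnot : ¬IsHalfLine S) :
    conc S = 2 ↔ ∀ h : ℕ, h ∉ S → mult S < h → h + 1 ∈ S := by
  obtain ⟨h0, -, hfin⟩ := hS
  constructor
  · intro hc h hh hmh
    exact (mem_or_succ_mem_of_conc_le_two hfin hc.le hmh.le).resolve_left hh
  · intro H
    have hle : conc S ≤ 2 := by
      refine (conc_le_iff hfin 2).mpr fun s hs hs0 => ?_
      by_cases hs1 : s + 1 ∈ S
      · exact ⟨s + 1, hs1, by omega, by omega⟩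
      · exact ⟨s + 2, H (s + 1) hs1 (Nat.lt_succ_of_le (mult_le hs hs0)), by omega, le_rfl⟩
    have hge : ¬conc S ≤ 1 := fun h1 => hnot (isHalfLine_of_conc_le_one h0 hfin h1)
    omega
end

section
/- Let S be a numerical semigroup that is not a half-line. Then C(S) = 2 if and only if for every minimal generator x of S, the set {x+1, x+2} intersects S. -/
/-!
A nonzero element `s` with `s + 1 ∉ S` exists unless `S` is a half-line, so `C(S) ≥ 2`, and
`C(S) ≤ 2` says that every nonzero `s ∈ S` has `s + 1` or `s + 2` in `S`. Writing `s = x + t`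
with `x` a minimal generator and `t ∈ S`, this property passes from `x` to `s`.
-/

open Set

lemma nextS_le_s2 {S : Set ℕ} {s y : ℕ} (hy : y ∈ S) (hsy : s < y) : nextS S s ≤ y :=
  Nat.sInf_le ⟨hy, hsy⟩

namespace IsNumSgp

variable {S : Set ℕ}

lemma mem_of_frob_lt (hS : IsNumSgp S) {n : ℕ} (h : frob S < n) : n ∈ S := by
  by_contra hn
  exact h.not_ge (le_csSup hS.2.2.bddAbove hn)

lemma nextS_mem_and_lt (hS : IsNumSgp S) (s : ℕ) : nextS S s ∈ S ∧ s < nextS S s :=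
  Nat.sInf_mem (s := {x | x ∈ S ∧ s < x}) ⟨max s (frob S) + 1, hS.mem_of_frob_lt (by omega), by omega⟩

lemma nextS_le_add_two_iff (hS : IsNumSgp S) (s : ℕ) :
    nextS S s ≤ s + 2 ↔ s + 1 ∈ S ∨ s + 2 ∈ S := by
  obtain ⟨hmem, hlt⟩ := hS.nextS_mem_and_lt s
  constructor
  · intro h
    obtain h1 | h2 : nextS S s = s + 1 ∨ nextS S s = s + 2 := by omega
    · exact .inl (h1 ▸ hmem)
    · exact .inr (h2 ▸ hmem)
  · rintro (h1 | h2)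
    · exact (nextS_le_s2 h1 (by omega)).trans (by omega)
    · exact nextS_le_s2 h2 (by omega)

lemma conc_le_iff (hS : IsNumSgp S) (k : ℕ) :
    conc S ≤ k ↔ ∀ s ∈ S, s ≠ 0 → nextS S s ≤ s + k := by
  have hbdd : BddAbove {d | ∃ s ∈ S, s ≠ 0 ∧ d = nextS S s - s} := by
    refine ⟨frob S + 1, ?_⟩
    rintro _ ⟨s, hs, -, rfl⟩
    have : nextS S s ≤ s + frob S + 1 := nextS_le_s2 (hS.mem_of_frob_lt (by omega)) (by omega)
    omega
  constructor
  · intro h s hs hs0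
    have := (le_csSup hbdd ⟨s, hs, hs0, rfl⟩).trans h
    omega
  · intro h
    refine csSup_le' ?_
    rintro _ ⟨s, hs, hs0, rfl⟩
    have := h s hs hs0
    omega

lemma isHalfLine_of_add_one_mem (hS : IsNumSgp S) (h : ∀ s ∈ S, s ≠ 0 → s + 1 ∈ S) :
    IsHalfLine S := by
  have hmult : mult S ∈ S ∧ mult S ≠ 0 :=
    Nat.sInf_mem (s := {n | n ∈ S ∧ n ≠ 0}) ⟨frob S + 1, hS.mem_of_frob_lt (by omega), by omega⟩
  have hge : ∀ k, mult S + k ∈ S := by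
    intro k
    induction k with
    | zero => exact hmult.1
    | succ k ih => exact h (mult S + k) ih (by omega)
  refine ⟨mult S, Set.ext fun n => ?_⟩
  simp only [Delta, mem_union, mem_singleton_iff, mem_ofPred_eq]
  constructor
  · intro hn
    by_cases hn0 : n = 0
    · exact .inl hn0
    · exact .inr (Nat.sInf_le ⟨hn, hn0⟩)
  · rintro (rfl | hn)
    · exact hS.1
    · simpa [Nat.add_sub_cancel' hn] using hge (n - mult S)

lemma two_le_conc (hS : IsNumSgp S) (hnot : ¬IsHalfLine S) : 2 ≤ conc S := by
  by_contra! hlt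
  refine hnot (hS.isHalfLine_of_add_one_mem fun s hs hs0 => ?_)
  have hle := (hS.conc_le_iff 1).1 (by omega) s hs hs0
  obtain ⟨hmem, hlt⟩ := hS.nextS_mem_and_lt s
  rwa [show nextS S s = s + 1 by omega] at hmem

lemma exists_isMinGen_add (hS : IsNumSgp S) {s : ℕ} (hs : s ∈ S) (hs0 : s ≠ 0) :
    ∃ x, IsMinGen S x ∧ ∃ t ∈ S, s = x + t := by
  induction s using Nat.strong_induction_on with
  | _ s ih =>
    by_cases hmin : IsMinGen S s
    · exact ⟨s, hmin, 0, hS.1, rfl⟩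
    · obtain ⟨a, ha, b, hb, ha0, hb0, rfl⟩ : ∃ a ∈ S, ∃ b ∈ S, a ≠ 0 ∧ b ≠ 0 ∧ a + b = s := by
        by_contra hno
        exact hmin ⟨hs, hs0, hno⟩
      obtain ⟨x, hx, t, ht, rfl⟩ := ih a (by omega) ha ha0
      exact ⟨x, hx, t + b, hS.2.1 t ht b hb, by omega⟩

end IsNumSgp

theorem stmt2 (S : Set ℕ) (hS : IsNumSgp S) (hnot : ¬IsHalfLine S) :
    conc S = 2 ↔ ∀ x : ℕ, IsMinGen S x → (x + 1 ∈ S ∨ x + 2 ∈ S) := by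
  rw [← (hS.two_le_conc hnot).ge_iff_eq', hS.conc_le_iff]
  simp only [hS.nextS_le_add_two_iff]
  refine ⟨fun h x hx => h x hx.1 hx.2.1, fun h s hs hs0 => ?_⟩
  obtain ⟨x, hx, t, ht, rfl⟩ := hS.exists_isMinGen_add hs hs0
  rcases h x hx with h1 | h2
  · exact .inl (by simpa [add_right_comm] using hS.2.1 _ h1 t ht)
  · exact .inr (by simpa [add_right_comm] using hS.2.1 _ h2 t ht)
end

section
/- Let S be a numerical semigroup and x ∈ S with x ≠ 0. Then S \ {x} is a numerical semigroup if and only if x is a minimal generator of S. -/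
open Set

theorem IsMinGen.of_isNumSgp_diff_singleton {S : Set ℕ} {x : ℕ} (hx : x ∈ S) (hx0 : x ≠ 0)
    (hS' : IsNumSgp (S \ {x})) : IsMinGen S x := by
  refine ⟨hx, hx0, ?_⟩
  rintro ⟨a, ha, b, hb, ha0, hb0, rfl⟩
  have hax : a ≠ a + b := by omega
  have hbx : b ≠ a + b := by omega
  exact (hS'.2.1 a ⟨ha, hax⟩ b ⟨hb, hbx⟩).2 rfl

theorem IsNumSgp.diff_singleton {S : Set ℕ} {x : ℕ} (hS : IsNumSgp S) (hx : IsMinGen S x) :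
    IsNumSgp (S \ {x}) := by
  obtain ⟨h0, hadd, hfin⟩ := hS
  obtain ⟨-, hx0, hmin⟩ := hx
  refine ⟨⟨h0, Ne.symm hx0⟩, ?_, ?_⟩
  · rintro a ⟨ha, hax⟩ b ⟨hb, hbx⟩
    refine ⟨hadd a ha b hb, fun hab => ?_⟩
    rw [mem_singleton_iff] at hab hax hbx
    rcases Nat.eq_zero_or_pos a with rfl | ha0
    · exact hbx (by omega)
    rcases Nat.eq_zero_or_pos b with rfl | hb0
    · exact hax hab
    exact hmin ⟨a, ha, b, hb, ha0.ne', hb0.ne', hab⟩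
  · rw [compl_sdiff]
    exact (finite_singleton x).union hfin

theorem stmt6 (S : Set ℕ) (x : ℕ) (hS : IsNumSgp S) (hx : x ∈ S) (hx0 : x ≠ 0) :
    IsNumSgp (S \ {x}) ↔ IsMinGen S x :=
  ⟨IsMinGen.of_isNumSgp_diff_singleton hx hx0, hS.diff_singleton⟩
end

section
/- Let S be a numerical semigroup with Frobenius number F that is not irreducible, and let h = max{x ∈ ℕ \ S | F - x ∉ S and x ≠ F/2}. Then S ∪ {h} is a numerical semigroup with Frobenius number F. -/
/-!
If `h` is the largest gap `x` such that `F - x` is also a gap and `2 * x ≠ F`, then `F - h` is such a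
gap as well, so `F < 2 * h`. Hence `h + h > F` lies in `S`, and for `0 ≠ a ∈ S` the integer `a + h`
cannot be a gap: `F - (a + h)` is a gap (otherwise adding `a` puts `F - h` in `S`) and `2 * (a + h) > F`,
so `a + h` would contradict the maximality of `h`. Non-irreducibility makes the set of such gaps
nonempty, because otherwise every numerical semigroup properly containing `S` contains `F`.
-/

open Set

def symmetryDefects (S : Set ℕ) : Set ℕ :=
  {x | x ∉ S ∧ frob S - x ∉ S ∧ 2 * x ≠ frob S}

section Frobenius

variable {S T : Set ℕ}

theorem le_frob_of_notMem (hfin : Sᶜ.Finite) {x : ℕ} (hx : x ∉ S) : x ≤ frob S :=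
  le_csSup hfin.bddAbove hx

theorem frob_notMem (hfin : Sᶜ.Finite) (hne : Sᶜ.Nonempty) : frob S ∉ S :=
  hne.csSup_mem hfin

theorem frob_eq_of_subset (hST : S ⊆ T) (hfin : Sᶜ.Finite) (hF : frob S ∉ T) :
    frob T = frob S :=
  le_antisymm
    (csSup_le ⟨_, hF⟩ fun _ hx => le_frob_of_notMem hfin fun hxS => hx (hST hxS))
    (le_csSup (hfin.subset (compl_subset_compl.mpr hST)).bddAbove hF)

end Frobenius

theorem irred_univ : Irred univ :=
  fun ⟨T, _, _, _, hT, _, _⟩ => hT.2 (subset_univ T)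

theorem frob_mem_of_symmetryDefects_eq_empty {S T : Set ℕ} (hfin : Sᶜ.Finite)
    (hdef : symmetryDefects S = ∅) (hT : ∀ a ∈ T, ∀ b ∈ T, a + b ∈ T) (hST : S ⊂ T) :
    frob S ∈ T := by
  obtain ⟨x, hxT, hxS⟩ := exists_of_ssubset hST
  have hxF := le_frob_of_notMem hfin hxS
  have hx : x ∉ symmetryDefects S := hdef ▸ notMem_empty x
  by_cases hFx : frob S - x ∈ S
  · simpa [hxF] using hT x hxT _ (hST.1 hFx)
  · have h2x : 2 * x = frob S := by simpa [symmetryDefects, hxS, hFx] using hx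
    simpa [← h2x, two_mul] using hT x hxT x hxT

theorem irred_of_symmetryDefects_eq_empty {S : Set ℕ} (hfin : Sᶜ.Finite) (hne : Sᶜ.Nonempty)
    (hdef : symmetryDefects S = ∅) : Irred S := by
  rintro ⟨T₁, T₂, hT₁, hT₂, hST₁, hST₂, rfl⟩
  exact frob_notMem hfin hne
    ⟨frob_mem_of_symmetryDefects_eq_empty hfin hdef hT₁.2.1 hST₁,
      frob_mem_of_symmetryDefects_eq_empty hfin hdef hT₂.2.1 hST₂⟩

namespace IsNumSgp

variable {S : Set ℕ} (hS : IsNumSgp S) {h : ℕ} (hh : IsGreatest (symmetryDefects S) h)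
include hS hh

theorem frob_lt_two_mul_of_isGreatest : frob S < 2 * h := by
  obtain ⟨hhS, hFh, h2h⟩ := hh.1
  have hhF := le_frob_of_notMem hS.2.2 hhS
  have hreflect : frob S - h ∈ symmetryDefects S :=
    ⟨hFh, by rwa [Nat.sub_sub_self hhF], by omega⟩
  have := hh.2 hreflect
  omega

theorem add_self_mem_of_isGreatest : h + h ∈ S := by
  by_contra hhh
  have := le_frob_of_notMem hS.2.2 hhh
  have := hS.frob_lt_two_mul_of_isGreatest hh
  omega

theorem add_mem_of_isGreatest {a : ℕ} (ha : a ∈ S) (ha0 : a ≠ 0) : a + h ∈ S := by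
  by_contra hah
  have hahF := le_frob_of_notMem hS.2.2 hah
  have hFah : frob S - (a + h) ∉ S := fun hmem => by
    have hsum := hS.2.1 _ hmem a ha
    rw [show frob S - (a + h) + a = frob S - h by omega] at hsum
    exact hh.1.2.1 hsum
  have := hS.frob_lt_two_mul_of_isGreatest hh
  have := hh.2 ⟨hah, hFah, by omega⟩
  omega

theorem union_singleton_of_isGreatest : IsNumSgp (S ∪ {h}) := by
  have hadd : ∀ a ∈ S, a + h ∈ S ∪ {h} := fun a ha => by
    rcases eq_or_ne a 0 with rfl | ha0
    · simp
    · exact Or.inl (hS.add_mem_of_isGreatest hh ha ha0)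
  refine ⟨Or.inl hS.1, ?_, hS.2.2.subset (compl_subset_compl.mpr subset_union_left)⟩
  rintro a (ha | rfl) b (hb | rfl)
  · exact Or.inl (hS.2.1 a ha b hb)
  · exact hadd a ha
  · exact add_comm b a ▸ hadd b hb
  · exact Or.inl (hS.add_self_mem_of_isGreatest hh)

theorem lt_frob_of_isGreatest : h < frob S := by
  obtain ⟨hhS, hFh, -⟩ := hh.1
  refine (le_frob_of_notMem hS.2.2 hhS).lt_of_ne fun hhF => hFh ?_
  simpa [hhF] using hS.1

end IsNumSgp

theorem stmt16 (S : Set ℕ) (F h : ℕ) (hS : IsNumSgp S) (hF : frob S = F)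
    (hirr : ¬Irred S)
    (hh : h = sSup {x : ℕ | x ∉ S ∧ F - x ∉ S ∧ 2 * x ≠ F}) :
    IsNumSgp (S ∪ {h}) ∧ frob (S ∪ {h}) = F := by
  subst hF
  have hgaps : Sᶜ.Nonempty :=
    nonempty_compl.mpr fun hSu => hirr (hSu ▸ irred_univ)
  have hdef : (symmetryDefects S).Nonempty :=
    nonempty_iff_ne_empty.mpr fun hdef => hirr (irred_of_symmetryDefects_eq_empty hS.2.2 hgaps hdef)
  have hdef_fin : (symmetryDefects S).Finite := hS.2.2.subset fun _ hx => hx.1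
  have hmax : IsGreatest (symmetryDefects S) h :=
    hh ▸ ⟨hdef.csSup_mem hdef_fin, fun _ hx => le_csSup hdef_fin.bddAbove hx⟩
  refine ⟨hS.union_singleton_of_isGreatest hmax, frob_eq_of_subset subset_union_left hS.2.2 ?_⟩
  rintro (hFS | hFh)
  · exact frob_notMem hS.2.2 hgaps hFS
  · exact (hS.lt_frob_of_isGreatest hmax).ne (eq_of_mem_singleton hFh).symm
end

section
/- Let F ≥ 2, let S be a numerical semigroup with concentration 2 and Frobenius number F which is not irreducible, and define α(S) = max{x ∈ ℕ \ S | F - x ∉ S, 2x ≠ F}. Define S_0 = S and S_{n+1} = S_n ∪ {α(S_n)} if S_n is not irreducible, S_{n+1} = S_n otherwise. Then there exists k ∈ ℕ such that S_k is an irreducible numerical semigroup (with concentration 2 and Frobenius number F). -/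
open Set

/-
Let `a` be the largest gap of `T` with `F - a` also a gap and `2a ≠ F`. Maximality gives `2a > F`
and `a + t ∈ T` for every positive `t ∈ T`, so `T ∪ {a}` is a numerical semigroup with the same
Frobenius number `F`. Concentration `2` survives: `a + 1 ∈ T` or `a + 1 = F` (otherwise the
positive element `F - a - 1` would sit below two consecutive gaps `a, a + 1`), and
`F - 1 ∈ T ∪ {a}` is followed by the gap `F`. Each step removes a gap, so the process stops; it
stops only when no such `a` is left, and then every gap `x` has `F - x ∈ T` or `2x = F`, which
forces irreducibility.
-/

-- The set whose maximum is the paper's `α(T)`.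
def unpairedGaps (T : Set ℕ) (F : ℕ) : Set ℕ := {x | x ∉ T ∧ F - x ∉ T ∧ 2 * x ≠ F}

-- For a numerical semigroup this is `conc T ≤ 2`.
def StepLeTwo (T : Set ℕ) : Prop := ∀ s ∈ T, s ≠ 0 → s + 1 ∈ T ∨ s + 2 ∈ T

namespace IsNumSgp

variable {T : Set ℕ}

lemma le_frob_of_notMem (hT : IsNumSgp T) {x : ℕ} (hx : x ∉ T) : x ≤ frob T :=
  le_csSup hT.2.2.bddAbove hx

lemma mem_of_frob_lt_s19 (hT : IsNumSgp T) {x : ℕ} (hx : frob T < x) : x ∈ T :=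
  by_contra fun h => (hx.trans_le (hT.le_frob_of_notMem h)).false

lemma frob_notMem (hT : IsNumSgp T) (h : frob T ≠ 0) : frob T ∉ T := by
  refine Nat.sSup_mem ?_ hT.2.2.bddAbove
  by_contra hc
  rw [Set.not_nonempty_iff_eq_empty] at hc
  exact h (by simp [frob, hc])

lemma one_notMem_of_notMem (hT : IsNumSgp T) {x : ℕ} (hx : x ∉ T) : 1 ∉ T := by
  intro h1
  have : ∀ n, n ∈ T := fun n => by
    induction n with
    | zero => exact hT.1
    | succ n ih => exact hT.2.1 n ih 1 h1
  exact hx (this x)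

lemma nextS_sub_le_conc (hT : IsNumSgp T) {s : ℕ} (hs : s ∈ T) (h0 : s ≠ 0) :
    nextS T s - s ≤ conc T := by
  refine le_csSup ⟨frob T + 1, ?_⟩
    (⟨s, hs, h0, rfl⟩ : _ ∈ {d | ∃ s ∈ T, s ≠ 0 ∧ d = nextS T s - s})
  rintro d ⟨s, -, -, rfl⟩
  have : nextS T s ≤ frob T + s + 1 :=
    Nat.sInf_le ⟨hT.mem_of_frob_lt_s19 (by omega), by omega⟩
  omega

lemma stepLeTwo (hT : IsNumSgp T) (hC : conc T ≤ 2) : StepLeTwo T := by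
  intro s hs h0
  have hnext : nextS T s ∈ T ∧ s < nextS T s :=
    Nat.sInf_mem (s := {x | x ∈ T ∧ s < x})
      ⟨frob T + s + 1, hT.mem_of_frob_lt_s19 (by omega), by omega⟩
  have := hT.nextS_sub_le_conc hs h0
  obtain h | h : nextS T s = s + 1 ∨ nextS T s = s + 2 := by omega
  · exact .inl (h ▸ hnext.1)
  · exact .inr (h ▸ hnext.1)

lemma union_singleton (hT : IsNumSgp T) {a : ℕ} (hadd : ∀ t ∈ T, t ≠ 0 → a + t ∈ T)
    (h2a : a + a ∈ T) :
    IsNumSgp (T ∪ {a}) := by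
  have hadd' : ∀ t ∈ T, a + t ∈ T ∪ {a} := fun t ht => by
    rcases eq_or_ne t 0 with rfl | h0
    · simp
    · exact .inl (hadd t ht h0)
  refine ⟨.inl hT.1, ?_, hT.2.2.subset fun x hx => (Set.compl_union T {a} ▸ hx).1⟩
  rintro x (hx | rfl) y (hy | rfl)
  · exact .inl (hT.2.1 x hx y hy)
  · exact add_comm y x ▸ hadd' x hx
  · exact hadd' y hy
  · exact .inl h2a

lemma frob_union_singleton (hT : IsNumSgp T) {a : ℕ} (hF : frob T ≠ 0) (ha : a ≠ frob T) :
    frob (T ∪ {a}) = frob T := by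
  have hFa : frob T ∉ T ∪ {a} := by
    rintro (h | h)
    exacts [hT.frob_notMem hF h, ha h.symm]
  refine le_antisymm (csSup_le ⟨_, hFa⟩ fun x hx => ?_) ?_
  · exact hT.le_frob_of_notMem fun h => hx (.inl h)
  · exact le_csSup (hT.2.2.subset fun x (hx : x ∉ T ∪ {a}) h => hx (.inl h)).bddAbove hFa

lemma genus_union_singleton_lt (hT : IsNumSgp T) {a : ℕ} (ha : a ∉ T) :
    genus (T ∪ {a}) < genus T := by
  have : (T ∪ {a})ᶜ = Tᶜ \ {a} := by ext; simp [not_or, and_comm]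
  rw [genus, genus, this]
  exact Set.ncard_sdiff_singleton_lt_of_mem ha hT.2.2

end IsNumSgp

namespace StepLeTwo

variable {T : Set ℕ}

lemma pred_mem_of_notMem (hT : StepLeTwo T) {s g : ℕ} (hs : s ∈ T) (h0 : s ≠ 0) (hsg : s < g)
    (hg : g ∉ T) :
    g - 1 ∈ T := by
  induction g with
  | zero => omega
  | succ g ih =>
    by_contra hg'
    simp only [Nat.add_sub_cancel] at hg'
    obtain rfl | hsg := (Nat.lt_succ_iff.mp hsg).eq_or_lt
    · exact hg' hs
    have := hT (g - 1) (ih hsg hg') (by omega)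
    rw [show g - 1 + 1 = g by omega, show g - 1 + 2 = g + 1 by omega] at this
    exact this.elim hg' hg

lemma conc_eq_two (hT : StepLeTwo T) {s : ℕ} (hs : s ∈ T) (h0 : s ≠ 0) (hs1 : s + 1 ∉ T)
    (hs2 : s + 2 ∈ T) :
    conc T = 2 := by
  have hle : ∀ t ∈ T, t ≠ 0 → nextS T t ≤ t + 2 := fun t ht ht0 =>
    (hT t ht ht0).elim
      (fun h => (Nat.sInf_le (⟨h, by omega⟩ : t + 1 ∈ {x | x ∈ T ∧ t < x})).trans (by omega))
      (fun h => Nat.sInf_le (⟨h, by omega⟩ : t + 2 ∈ {x | x ∈ T ∧ t < x}))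
  have hs' : nextS T s = s + 2 := by
    refine le_antisymm (hle s hs h0) (le_csInf ⟨_, hs2, by omega⟩ ?_)
    rintro x ⟨hx, hsx⟩
    by_contra hlt
    exact hs1 (show x = s + 1 by omega ▸ hx)
  have hmem : 2 ∈ {d | ∃ s ∈ T, s ≠ 0 ∧ d = nextS T s - s} := ⟨s, hs, h0, by omega⟩
  have hub : ∀ d ∈ {d | ∃ s ∈ T, s ≠ 0 ∧ d = nextS T s - s}, d ≤ 2 := by
    rintro d ⟨t, ht, ht0, rfl⟩
    have := hle t ht ht0
    omega
  exact le_antisymm (csSup_le ⟨2, hmem⟩ hub) (le_csSup ⟨2, hub⟩ hmem)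

end StepLeTwo

section unpairedGaps

variable {T : Set ℕ} {F a : ℕ}

lemma irred_of_unpairedGaps_eq_empty (hT : IsNumSgp T) (hfr : frob T = F) (hF : F ≠ 0)
    (h : unpairedGaps T F = ∅) : Irred T := by
  have hFT : F ∉ T := hfr ▸ hT.frob_notMem (hfr ▸ hF)
  -- a gap `x` is either paired with `F - x ∈ T` or is `F / 2`; either way `x ∈ T'` forces `F ∈ T'`
  have hsub : ∀ T' : Set ℕ, IsNumSgp T' → T ⊆ T' → F ∉ T' → T' ⊆ T := by
    intro T' hT' hTT' hF' x hx
    by_contra hxT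
    have hxF : x ≤ F := hfr ▸ hT.le_frob_of_notMem hxT
    have hpair : F - x ∈ T ∨ 2 * x = F := by
      by_contra! hc
      exact (Set.eq_empty_iff_forall_notMem.1 h x) ⟨hxT, hc.1, hc.2⟩
    rcases hpair with hc | hc
    · have := hT'.2.1 x hx _ (hTT' hc)
      rw [Nat.add_sub_cancel' hxF] at this
      exact hF' this
    · have := hT'.2.1 x hx x hx
      rw [← two_mul, hc] at this
      exact hF' this
  rintro ⟨T₁, T₂, h₁, h₂, hs₁, hs₂, rfl⟩
  by_cases hF₁ : F ∈ T₁
  · exact hs₂.2 (hsub T₂ h₂ hs₂.1 fun hF₂ => hFT ⟨hF₁, hF₂⟩)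
  · exact hs₁.2 (hsub T₁ h₁ hs₁.1 hF₁)

lemma isGreatest_sSup_unpairedGaps (hT : IsNumSgp T) (hne : (unpairedGaps T F).Nonempty) :
    IsGreatest (unpairedGaps T F) (sSup (unpairedGaps T F)) := by
  have hbdd : BddAbove (unpairedGaps T F) := (hT.2.2.subset fun _ hx => hx.1).bddAbove
  exact ⟨Nat.sSup_mem hne hbdd, fun _ hx => le_csSup hbdd hx⟩

lemma lt_two_mul_of_isGreatest (ha : IsGreatest (unpairedGaps T F) a) : F < 2 * a := by
  obtain ⟨⟨haT, haF, ha2⟩, hmax⟩ := ha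
  by_contra! hle
  have := hmax ⟨haF, by rwa [Nat.sub_sub_self (by omega)], by omega⟩
  omega

lemma lt_of_isGreatest (hT : IsNumSgp T) (hfr : frob T = F)
    (ha : IsGreatest (unpairedGaps T F) a) : a < F := by
  refine lt_of_le_of_ne (hfr ▸ hT.le_frob_of_notMem ha.1.1) fun h => ha.1.2.1 ?_
  simpa [h] using hT.1

lemma add_mem_of_isGreatest (hT : IsNumSgp T) (hfr : frob T = F)
    (ha : IsGreatest (unpairedGaps T F) a) {t : ℕ} (ht : t ∈ T) (h0 : t ≠ 0) : a + t ∈ T := by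
  have h2a := lt_two_mul_of_isGreatest ha
  by_contra hat
  have hle : a + t ≤ F := hfr ▸ hT.le_frob_of_notMem hat
  have hpair : F - (a + t) ∈ T := by
    by_contra hc
    have := ha.2 ⟨hat, hc, by omega⟩
    omega
  have := hT.2.1 _ hpair t ht
  rw [show F - (a + t) + t = F - a by omega] at this
  exact ha.1.2.1 this

lemma add_one_mem_of_isGreatest (hT : IsNumSgp T) (hfr : frob T = F) (hstep : StepLeTwo T)
    (ha : IsGreatest (unpairedGaps T F) a) : a + 1 ∈ T ∨ a + 1 = F := by
  have h2a := lt_two_mul_of_isGreatest ha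
  by_contra! h
  have hle : a + 1 ≤ F := hfr ▸ hT.le_frob_of_notMem h.1
  have hpair : F - (a + 1) ∈ T := by
    by_contra hc
    have := ha.2 ⟨h.1, hc, by omega⟩
    omega
  -- `F - (a + 1)` is a positive element below the gap `a + 1`
  have := hstep.pred_mem_of_notMem hpair (by omega) (by omega) h.1
  exact ha.1.1 (by simpa using this)

lemma sub_one_mem_of_isGreatest (hT : IsNumSgp T) (hfr : frob T = F)
    (ha : IsGreatest (unpairedGaps T F) a) : F - 1 ∈ T ∨ F - 1 = a := by
  have h2a := lt_two_mul_of_isGreatest ha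
  have haF := lt_of_isGreatest hT hfr ha
  by_contra! h
  have h1 : F - (F - 1) ∉ T := by
    rw [Nat.sub_sub_self (by omega)]
    exact hT.one_notMem_of_notMem ha.1.1
  have := ha.2 ⟨h.1, h1, by omega⟩
  omega

lemma union_singleton_of_isGreatest (hT : IsNumSgp T) (hfr : frob T = F) (hC : conc T = 2)
    (ha : IsGreatest (unpairedGaps T F) a) :
    IsNumSgp (T ∪ {a}) ∧ frob (T ∪ {a}) = F ∧ conc (T ∪ {a}) = 2 ∧
      genus (T ∪ {a}) < genus T := by
  have hstep := hT.stepLeTwo hC.le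
  have h2a := lt_two_mul_of_isGreatest ha
  have haF := lt_of_isGreatest hT hfr ha
  have hFT : F ∉ T := hfr ▸ hT.frob_notMem (by omega)
  have hF1 : F + 1 ∈ T := hT.mem_of_frob_lt_s19 (by omega)
  have hstep' : StepLeTwo (T ∪ {a}) := by
    rintro s (hs | rfl) h0
    · exact (hstep s hs h0).imp .inl .inl
    · rcases add_one_mem_of_isGreatest hT hfr hstep ha with h | h
      · exact .inl (.inl h)
      · exact .inr (.inl (by rwa [show s + 2 = F + 1 by omega]))
  refine ⟨hT.union_singleton (fun t ht h0 => add_mem_of_isGreatest hT hfr ha ht h0)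
      (hT.mem_of_frob_lt_s19 (by omega)), by rw [hT.frob_union_singleton (by omega) (by omega), hfr],
    hstep'.conc_eq_two (s := F - 1) ?_ (by omega) ?_ ?_, hT.genus_union_singleton_lt ha.1.1⟩
  · rcases sub_one_mem_of_isGreatest hT hfr ha with h | h
    exacts [.inl h, .inr h]
  · rw [show F - 1 + 1 = F by omega]
    rintro (h | h)
    exacts [hFT h, haF.ne' h]
  · exact .inl (by rwa [show F - 1 + 2 = F + 1 by omega])

end unpairedGaps

theorem stmt19_general (F : ℕ) (hF : 2 ≤ F) (S : Set ℕ) (hS : IsNumSgp S)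
    (hC : conc S = 2) (hFS : frob S = F)
    (alpha : Set ℕ → ℕ)
    (halpha : ∀ T : Set ℕ,
      alpha T = sSup {x : ℕ | x ∉ T ∧ F - x ∉ T ∧ 2 * x ≠ F})
    (seq : ℕ → Set ℕ) (h0 : seq 0 = S)
    (hrec : ∀ n, (¬Irred (seq n) → seq (n + 1) = seq n ∪ {alpha (seq n)}) ∧
      (Irred (seq n) → seq (n + 1) = seq n)) :
    ∃ k : ℕ, IsNumSgp (seq k) ∧ Irred (seq k) ∧ conc (seq k) = 2 ∧
      frob (seq k) = F := by
  have hnext : ∀ n, IsNumSgp (seq n) → frob (seq n) = F → conc (seq n) = 2 → ¬Irred (seq n) →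
      IsNumSgp (seq (n + 1)) ∧ frob (seq (n + 1)) = F ∧ conc (seq (n + 1)) = 2 ∧
        genus (seq (n + 1)) < genus (seq n) := by
    intro n hT hfr hCn hirr
    have hne : (unpairedGaps (seq n) F).Nonempty := Set.nonempty_iff_ne_empty.2 fun h =>
      hirr (irred_of_unpairedGaps_eq_empty hT hfr (by omega) h)
    rw [(hrec n).1 hirr, halpha]
    exact union_singleton_of_isGreatest hT hfr hCn (isGreatest_sSup_unpairedGaps hT hne)
  have hinv : ∀ n, IsNumSgp (seq n) ∧ frob (seq n) = F ∧ conc (seq n) = 2 := by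
    intro n
    induction n with
    | zero => exact h0 ▸ ⟨hS, hFS, hC⟩
    | succ n ih =>
      obtain ⟨hT, hfr, hCn⟩ := ih
      by_cases hirr : Irred (seq n)
      · exact (hrec n).2 hirr ▸ ⟨hT, hfr, hCn⟩
      · obtain ⟨hT', hfr', hC', -⟩ := hnext n hT hfr hCn hirr
        exact ⟨hT', hfr', hC'⟩
  obtain ⟨k, hk⟩ : ∃ k, Irred (seq k) := by
    by_contra! h
    exact not_strictAnti_of_wellFoundedLT (fun n => genus (seq n))
      (strictAnti_nat_of_succ_lt fun n => (hnext n (hinv n).1 (hinv n).2.1 (hinv n).2.2 (h n)).2.2.2)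
  obtain ⟨hT, hfr, hCk⟩ := hinv k
  exact ⟨k, hT, hk, hCk, hfr⟩

theorem stmt19 (F : ℕ) (hF : 2 ≤ F) (S : Set ℕ) (hS : IsNumSgp S)
    (hC : conc S = 2) (hFS : frob S = F) (hirr : ¬Irred S)
    (alpha : Set ℕ → ℕ)
    (halpha : ∀ T : Set ℕ,
      alpha T = sSup {x : ℕ | x ∉ T ∧ F - x ∉ T ∧ 2 * x ≠ F})
    (seq : ℕ → Set ℕ) (h0 : seq 0 = S)
    (hrec : ∀ n, (¬Irred (seq n) → seq (n + 1) = seq n ∪ {alpha (seq n)}) ∧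
      (Irred (seq n) → seq (n + 1) = seq n)) :
    ∃ k : ℕ, IsNumSgp (seq k) ∧ Irred (seq k) ∧ conc (seq k) = 2 ∧
      frob (seq k) = F :=
  stmt19_general F hF S hS hC hFS alpha halpha seq h0 hrec
end
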